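/- If a hypothesis class H has effective width w(H) > 1, then for all k ≤ T, M*(H, T, k) = Ω(√(T(k+1))). -/

import Mathlib

/-!
Walk down a branch `x₀, x₁, …` of deep width-1 shattered trees: for every `i` some hypothesis
labels `x_j` negatively for `j < i` and `x_i` positively. The adversary shows the current node
and, whenever the learner predicts `1`, reveals the label `0`, moving on to the next node after
`k + 1` such rounds. Predictions `0` reveal nothing, so the adversary may stop at any time `τ`
and choose the hidden labels afterwards: rounds at the node `i` reached at `τ` in which the
learner predicted `0` become positive, and from `τ` on it shows `x_i` labelled `1`. The
hypothesis of node `i` then errs at most `k` times, while the learner has erred in every round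
in which it predicted `1` and in every round spent at node `i`. Stopping as soon as a node has
been held for `B = ⌊√(T(k+1))⌋ + 1` rounds, or at time `T` (when every node passed took at most
`B` rounds but cost `k + 1` mistakes), forces at least `√(T(k+1)) / 2` mistakes.
-/

/-- `W1Shatters H d` : `H` shatters a width-1 tree of depth `d` (a perfect binary tree
truncated below the first right edge of each branch): at each node some `h ∈ H` realizes
the branch ending with the right edge, and the `x → 0` restriction shatters the left
subtree. -/
inductive W1Shatters {X : Type*} : Set (X → Bool) → ℕ → Prop
  | zero (H : Set (X → Bool)) (hne : H.Nonempty) : W1Shatters H 0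
  | succ (H : Set (X → Bool)) (d : ℕ) (x : X)
      (hr : ∃ h ∈ H, h x = true)
      (hl : W1Shatters {h ∈ H | h x = false} d) : W1Shatters H (d + 1)

/-- A deterministic apple tasting learner for a hypothesis class: it maps the feedback
history (instances together with the revealed label when the learner predicted `1`)
and the current instance to a prediction. -/
def ConceptLearner (X : Type) : Type := List (X × Option Bool) → X → Bool

/-- The feedback history produced by running learner `Lrn` on instances `x` and true
labels `y` under apple tasting feedback. -/
def histC (X : Type) (Lrn : ConceptLearner X) (x : ℕ → X) (y : ℕ → Bool) :
    ℕ → List (X × Option Bool)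
  | 0 => []
  | t + 1 =>
      histC X Lrn x y t ++
        [(x t, if Lrn (histC X Lrn x y t) (x t) = true then some (y t) else none)]

/-- The learner's prediction in round `t`. -/
def predC (X : Type) (Lrn : ConceptLearner X) (x : ℕ → X) (y : ℕ → Bool) (t : ℕ) : Bool :=
  Lrn (histC X Lrn x y t) (x t)

/-- The number of mistakes made by the learner during the first `T` rounds. -/
def mistakesC (X : Type) (Lrn : ConceptLearner X) (x : ℕ → X) (y : ℕ → Bool) (T : ℕ) : ℕ :=
  ((Finset.range T).filter (fun t => predC X Lrn x y t ≠ y t)).card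

theorem W1Shatters.exists_branch {X : Type} {H : Set (X → Bool)} {d : ℕ}
    (h : W1Shatters H (d + 1)) :
    ∃ xs : ℕ → X, ∀ i ≤ d, ∃ f ∈ H, f (xs i) = true ∧ ∀ j < i, f (xs j) = false := by
  induction d generalizing H with
  | zero =>
    cases h with
    | succ _ _ x hr =>
      obtain ⟨f, hf, hfx⟩ := hr
      exact ⟨fun _ => x, fun i hi => ⟨f, hf, hfx, by omega⟩⟩
  | succ d ih =>
    cases h with
    | succ _ _ x hr hl =>
      obtain ⟨f, hf, hfx⟩ := hr
      obtain ⟨xs, hxs⟩ := ih hl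
      refine ⟨fun | 0 => x | n + 1 => xs n, ?_⟩
      rintro (_ | i) hi
      · exact ⟨f, hf, hfx, by omega⟩
      · obtain ⟨g, ⟨hg, hgx⟩, hgi, hgj⟩ := hxs i (by omega)
        refine ⟨g, hg, hgi, ?_⟩
        rintro (_ | j) hj
        · exact hgx
        · exact hgj j (by omega)

theorem histC_congr {X : Type} {Lrn : ConceptLearner X} {x x' : ℕ → X} {y y' : ℕ → Bool}
    {n : ℕ} (hx : ∀ t < n, x t = x' t)
    (hy : ∀ t < n, predC X Lrn x' y' t = true → y t = y' t) :
    ∀ t ≤ n, histC X Lrn x y t = histC X Lrn x' y' t := by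
  intro t ht
  induction t with
  | zero => rfl
  | succ t ih =>
    simp only [histC, ih (by omega), hx t (by omega)]
    split_ifs with hp
    · rw [hy t (by omega) hp]
    · rfl

theorem predC_congr {X : Type} {Lrn : ConceptLearner X} {x x' : ℕ → X} {y y' : ℕ → Bool}
    {n : ℕ} (hx : ∀ t < n, x t = x' t)
    (hy : ∀ t < n, predC X Lrn x' y' t = true → y t = y' t) {t : ℕ} (ht : t < n) :
    predC X Lrn x y t = predC X Lrn x' y' t := by
  rw [predC, predC, histC_congr hx hy t ht.le, hx t ht]

theorem mul_le_four_mul_sq_of_stop {T k n ℓ : ℕ} (hk : k ≤ T)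
    (h : T ≤ n * (Nat.sqrt (T * (k + 1)) + 1) + ℓ ∨ Nat.sqrt (T * (k + 1)) + 1 ≤ ℓ) :
    T * (k + 1) ≤ 4 * ((k + 1) * n + ℓ) ^ 2 := by
  set s := Nat.sqrt (T * (k + 1))
  set M := (k + 1) * n + ℓ
  have hs : s ^ 2 ≤ T * (k + 1) := Nat.sqrt_le' _
  have hs' : T * (k + 1) < (s + 1) ^ 2 := Nat.lt_succ_sqrt' _
  rcases h with hT | hℓ
  · have hks : k ≤ s := Nat.le_sqrt.mpr (by nlinarith)
    have hM : T * (k + 1) ≤ (s + 1) * M :=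
      calc T * (k + 1) ≤ (n * (s + 1) + ℓ) * (k + 1) := Nat.mul_le_mul_right _ hT
        _ = (s + 1) * ((k + 1) * n) + ℓ * (k + 1) := by ring
        _ ≤ (s + 1) * ((k + 1) * n) + ℓ * (s + 1) := by gcongr
        _ = (s + 1) * M := by ring
    have hsM : s ≤ 2 * M := by
      by_contra! hlt
      nlinarith
    nlinarith
  · have : ℓ ≤ M := Nat.le_add_left ℓ _
    nlinarith

theorem half_mul_sqrt_le_of_le_four_mul_sq {n m : ℕ} (h : n ≤ 4 * m ^ 2) :
    1 / 2 * Real.sqrt n ≤ m := by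
  have h' : (n : ℝ) ≤ (2 * m) ^ 2 := by rw [mul_pow]; norm_num; exact_mod_cast h
  linarith [Real.sqrt_le_iff.mpr ⟨by positivity, h'⟩]

namespace BranchAdversary

open Finset

/-- `ones` and `zeros` count the rounds spent at `node` in which the learner predicted `1`,
respectively `0`. -/
structure Tally where
  node : ℕ
  ones : ℕ
  zeros : ℕ

def Tally.next (k : ℕ) (c : Tally) : Bool → Tally
  | true => if c.ones = k then ⟨c.node + 1, 0, 0⟩ else ⟨c.node, c.ones + 1, c.zeros⟩
  | false => ⟨c.node, c.ones, c.zeros + 1⟩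

def tally (k : ℕ) (g : ℕ → Bool) : ℕ → Tally
  | 0 => ⟨0, 0, 0⟩
  | t + 1 => (tally k g t).next k (g t)

section Tally

variable {k : ℕ} {g : ℕ → Bool} {t : ℕ}

theorem tally_succ_of_eq_false (h : g t = false) :
    tally k g (t + 1) = ⟨(tally k g t).node, (tally k g t).ones, (tally k g t).zeros + 1⟩ := by
  rw [tally, h, Tally.next]

theorem tally_succ_of_ones_eq (h : g t = true) (hk : (tally k g t).ones = k) :
    tally k g (t + 1) = ⟨(tally k g t).node + 1, 0, 0⟩ := by
  rw [tally, h, Tally.next, if_pos hk]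

theorem tally_succ_of_ones_ne (h : g t = true) (hk : (tally k g t).ones ≠ k) :
    tally k g (t + 1) = ⟨(tally k g t).node, (tally k g t).ones + 1, (tally k g t).zeros⟩ := by
  rw [tally, h, Tally.next, if_neg hk]

theorem ones_tally_le (t : ℕ) : (tally k g t).ones ≤ k := by
  induction t with
  | zero => exact Nat.zero_le k
  | succ t ih =>
    cases h : g t
    · rw [tally_succ_of_eq_false h]; exact ih
    · by_cases hk : (tally k g t).ones = k
      · rw [tally_succ_of_ones_eq h hk]; exact Nat.zero_le k
      · rw [tally_succ_of_ones_ne h hk]; dsimp only; omega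

theorem node_tally_succ_le (t : ℕ) : (tally k g t).node ≤ (tally k g (t + 1)).node := by
  cases h : g t
  · rw [tally_succ_of_eq_false h]
  · by_cases hk : (tally k g t).ones = k
    · rw [tally_succ_of_ones_eq h hk]; exact Nat.le_succ _
    · rw [tally_succ_of_ones_ne h hk]

theorem monotone_node_tally : Monotone fun t => (tally k g t).node :=
  monotone_nat_of_le_succ node_tally_succ_le

theorem card_filter_eq_true (t : ℕ) :
    #{r ∈ range t | g r = true} = (k + 1) * (tally k g t).node + (tally k g t).ones := by
  induction t with
  | zero => rfl
  | succ t ih =>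
    rw [range_add_one, filter_insert]
    cases h : g t
    · rw [if_neg Bool.false_ne_true, tally_succ_of_eq_false h, ih]
    · rw [if_pos rfl, card_insert_of_notMem (by simp), ih]
      by_cases hk : (tally k g t).ones = k
      · rw [tally_succ_of_ones_eq h hk]; dsimp only; rw [hk]; ring
      · rw [tally_succ_of_ones_ne h hk]; rfl

theorem node_tally_le (t : ℕ) : (tally k g t).node ≤ t := by
  have := card_filter_eq_true (k := k) (g := g) t
  have := card_filter_le (range t) (fun r => g r = true)
  rw [card_range] at this
  nlinarith

theorem card_filter_node_eq_and_eq (b : Bool) (t : ℕ) :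
    #{r ∈ range t | (tally k g r).node = (tally k g t).node ∧ g r = b}
      = if b then (tally k g t).ones else (tally k g t).zeros := by
  induction t with
  | zero => cases b <;> rfl
  | succ t ih =>
    have hprev : ∀ r ∈ range (t + 1), (tally k g r).node ≤ (tally k g t).node := fun r hr =>
      monotone_node_tally (Nat.lt_succ_iff.mp (mem_range.mp hr))
    by_cases hadv : g t = true ∧ (tally k g t).ones = k
    · rw [tally_succ_of_ones_eq hadv.1 hadv.2, filter_false_of_mem]
      · cases b <;> rfl
      · intro r hr h; have := hprev r hr; dsimp only at h; omega
    · have hnode : (tally k g (t + 1)).node = (tally k g t).node := by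
        cases h : g t
        · rw [tally_succ_of_eq_false h]
        · rw [tally_succ_of_ones_ne h (hadv ⟨h, ·⟩)]
      rw [hnode, range_add_one, filter_insert, apply_ite card,
        card_insert_of_notMem (by simp), ih]
      cases h : g t
      · rw [tally_succ_of_eq_false h]; cases b <;> simp
      · rw [tally_succ_of_ones_ne h (hadv ⟨h, ·⟩)]; cases b <;> simp

theorem le_node_mul_add_of_forall_lt (B t : ℕ)
    (hB : ∀ r < t, (tally k g r).ones + (tally k g r).zeros < B) :
    t ≤ (tally k g t).node * B + (tally k g t).ones + (tally k g t).zeros := by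
  induction t with
  | zero => exact Nat.zero_le _
  | succ t ih =>
    have ih := ih fun r hr => hB r (by omega)
    have hBt := hB t (by omega)
    cases h : g t
    · rw [tally_succ_of_eq_false h]; dsimp only; omega
    · by_cases hk : (tally k g t).ones = k
      · rw [tally_succ_of_ones_eq h hk]; dsimp only; rw [Nat.succ_mul]; omega
      · rw [tally_succ_of_ones_ne h hk]; dsimp only; omega

theorem exists_stop_time (T B : ℕ) :
    ∃ τ ≤ T, T ≤ (tally k g τ).node * B + ((tally k g τ).ones + (tally k g τ).zeros) ∨
      B ≤ (tally k g τ).ones + (tally k g τ).zeros := by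
  classical
  have hex : ∃ t, T ≤ t ∨ B ≤ (tally k g t).ones + (tally k g t).zeros := ⟨T, Or.inl le_rfl⟩
  refine ⟨Nat.find hex, Nat.find_le (Or.inl le_rfl), ?_⟩
  rcases Nat.find_spec hex with hT | hB
  · left
    refine hT.trans ((le_node_mul_add_of_forall_lt B _ fun r hr => ?_).trans_eq (by ring))
    exact lt_of_not_ge fun h => Nat.find_min hex hr (Or.inr h)
  · exact Or.inr hB

end Tally

section Game

variable {X : Type} (Lrn : ConceptLearner X) (xs : ℕ → X) (k : ℕ)

def play : ℕ → List (X × Option Bool) × Tally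
  | 0 => ([], ⟨0, 0, 0⟩)
  | t + 1 =>
    let b := Lrn (play t).1 (xs (play t).2.node)
    ((play t).1 ++ [(xs (play t).2.node, if b then some false else none)], (play t).2.next k b)

def guess (t : ℕ) : Bool := Lrn (play Lrn xs k t).1 (xs (play Lrn xs k t).2.node)

theorem play_snd (t : ℕ) : (play Lrn xs k t).2 = tally k (guess Lrn xs k) t := by
  induction t with
  | zero => rfl
  | succ t ih => rw [tally, ← ih]; rfl

theorem predC_play (t : ℕ) :
    predC X Lrn (fun r => xs (tally k (guess Lrn xs k) r).node) (fun _ => false) t =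
      guess Lrn xs k t := by
  have hist : ∀ t, histC X Lrn (fun r => xs (tally k (guess Lrn xs k) r).node) (fun _ => false) t
      = (play Lrn xs k t).1 := by
    intro t
    induction t with
    | zero => rfl
    | succ t ih => rw [histC, ih, ← play_snd]; rfl
  rw [predC, hist, ← play_snd]; rfl

variable (τ : ℕ)

def stopInst (t : ℕ) : X :=
  xs (tally k (guess Lrn xs k) (if t < τ then t else τ)).node

def stopLabel (t : ℕ) : Bool :=
  if t < τ then
    decide ((tally k (guess Lrn xs k) t).node = (tally k (guess Lrn xs k) τ).node ∧
      guess Lrn xs k t = false)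
  else true

variable {Lrn xs k τ}

theorem predC_stop {t : ℕ} (ht : t < τ) :
    predC X Lrn (stopInst Lrn xs k τ) (stopLabel Lrn xs k τ) t = guess Lrn xs k t := by
  rw [predC_congr (fun r hr => by rw [stopInst, if_pos hr]) (fun r hr hg => ?_) ht, predC_play]
  rw [predC_play] at hg
  simp [stopLabel, hr, hg]

theorem le_mistakesC_stop {T : ℕ} (hτ : τ ≤ T) :
    (k + 1) * (tally k (guess Lrn xs k) τ).node +
        ((tally k (guess Lrn xs k) τ).ones + (tally k (guess Lrn xs k) τ).zeros) ≤
      mistakesC X Lrn (stopInst Lrn xs k τ) (stopLabel Lrn xs k τ) T := by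
  have hzeros := card_filter_node_eq_and_eq (k := k) (g := guess Lrn xs k) false τ
  rw [if_neg Bool.false_ne_true] at hzeros
  rw [← add_assoc, ← card_filter_eq_true, ← hzeros, ← card_union_of_disjoint]
  · refine card_le_card fun r hr => ?_
    have hrτ : r < τ := by simp only [mem_union, mem_filter, mem_range] at hr; tauto
    rw [mem_filter, mem_range, predC_stop hrτ]
    refine ⟨hrτ.trans_le hτ, ?_⟩
    simp only [mem_union, mem_filter] at hr
    rcases hr with ⟨-, hg⟩ | ⟨-, hnode, hg⟩
    · simp [stopLabel, hrτ, hg]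
    · simp [stopLabel, hrτ, hg, hnode]
  · exact disjoint_filter.mpr fun r _ h1 h2 => by simp [h1] at h2

theorem card_disagree_stop_le {T : ℕ} {f : X → Bool}
    (hfi : f (xs (tally k (guess Lrn xs k) τ).node) = true)
    (hfj : ∀ j < (tally k (guess Lrn xs k) τ).node, f (xs j) = false) :
    #{t ∈ range T | f (stopInst Lrn xs k τ t) ≠ stopLabel Lrn xs k τ t} ≤ k := by
  refine le_trans (card_le_card fun t ht => ?_)
    ((card_filter_node_eq_and_eq (g := guess Lrn xs k) true τ).trans_le (ones_tally_le τ))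
  rw [mem_filter] at ht ⊢
  by_cases htτ : t < τ
  · refine ⟨mem_range.mpr htτ, ?_⟩
    have hle := monotone_node_tally (k := k) (g := guess Lrn xs k) htτ.le
    rcases hle.lt_or_eq with hlt | heq
    · simp [stopInst, stopLabel, htτ, hfj _ hlt, hlt.ne] at ht
    · cases hg : guess Lrn xs k t
      · simp [stopInst, stopLabel, htτ, heq, hg, hfi] at ht
      · exact ⟨heq, rfl⟩
  · simp [stopInst, stopLabel, htτ, hfi] at ht

theorem exists_realizable_le_mistakesC {H : Set (X → Bool)} {T : ℕ}
    (hxs : ∀ i ≤ T, ∃ f ∈ H, f (xs i) = true ∧ ∀ j < i, f (xs j) = false) (hτ : τ ≤ T) :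
    ∃ (x : ℕ → X) (y : ℕ → Bool), (∃ f ∈ H, #{t ∈ range T | f (x t) ≠ y t} ≤ k) ∧
      (k + 1) * (tally k (guess Lrn xs k) τ).node +
          ((tally k (guess Lrn xs k) τ).ones + (tally k (guess Lrn xs k) τ).zeros) ≤
        mistakesC X Lrn x y T := by
  obtain ⟨f, hf, hfi, hfj⟩ := hxs _ ((node_tally_le τ).trans hτ)
  exact ⟨_, _, ⟨f, hf, card_disagree_stop_le hfi hfj⟩, le_mistakesC_stop hτ⟩

end Game

end BranchAdversary

/-- If `w(H) > 1` (equivalently, `H` shatters width-1 trees of arbitrary depth), then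
`M*(H,T,k) = Ω(√(T(k+1)))` for all `k ≤ T`: every deterministic apple tasting learner
makes at least `c·√(T(k+1))` mistakes on some `k`-realizable sequence of length `T`. -/
theorem wide_class_lower_bound :
    ∃ c : ℝ, 0 < c ∧
      ∀ (X : Type) (H : Set (X → Bool)), (∀ d : ℕ, W1Shatters H d) →
        ∀ T k : ℕ, k ≤ T →
          ∀ Lrn : ConceptLearner X, ∃ (x : ℕ → X) (y : ℕ → Bool),
            (∃ h ∈ H, ((Finset.range T).filter (fun t => h (x t) ≠ y t)).card ≤ k) ∧
            c * Real.sqrt (T * (k + 1)) ≤ (mistakesC X Lrn x y T : ℝ) := by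
  refine ⟨1 / 2, by norm_num, fun X H hH T k hkT Lrn => ?_⟩
  obtain ⟨xs, hxs⟩ := (hH (T + 1)).exists_branch
  obtain ⟨τ, hτT, hτ⟩ := BranchAdversary.exists_stop_time
    (g := BranchAdversary.guess Lrn xs k) T (Nat.sqrt (T * (k + 1)) + 1)
  obtain ⟨x, y, hrealizable, hmistakes⟩ :=
    BranchAdversary.exists_realizable_le_mistakesC hxs hτT
  refine ⟨x, y, hrealizable, ?_⟩
  have hbound := half_mul_sqrt_le_of_le_four_mul_sq (m := mistakesC X Lrn x y T)
    ((mul_le_four_mul_sq_of_stop hkT hτ).trans (by gcongr))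
  exact_mod_cast hbound
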